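/- arXiv:1603.03850 — 3 statements merged into one kernel-verified Lean document; each statement's English description precedes it below -/
import Mathlib

section
/- Let R be a ring, let 𝒜 be a class of left R-modules closed under isomorphisms and under arbitrary direct sums, and let ℬ be a class of left R-modules closed under isomorphisms and under direct summands. Then the following are equivalent: (1) for every acyclic (exact) unbounded complex X of left R-modules all of whose components X_n belong to 𝒜, every cycle module Z_n(X) belongs to ℬ; (2) every 𝒜-periodic module belongs to ℬ. -/
/-!
(1) ⇒ (2): a short exact sequence `0 → M →i A →p M → 0` splices into the acyclic complex
`⋯ → A →(i ∘ p) A →(i ∘ p) A → ⋯`, whose cycles are all `i(M) ≅ M`.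

(2) ⇒ (1): for an acyclic complex `X` the short exact sequences `0 → Z_n → X_n → Z_{n-1} → 0`
add up to `0 → ⨁ Z_n → ⨁ X_n → ⨁ Z_n → 0`, so `⨁ Z_n` is `𝒜`-periodic and every `Z_n` is a
direct summand of a module in `ℬ`.
-/

open CategoryTheory

universe u

namespace TotallyAcyclicPaper

/-- An unbounded chain complex of left `R`-modules. -/
abbrev Cx (R : Type u) [Ring R] := ChainComplex (ModuleCat.{u} R) ℤ

/-- A complex is acyclic (exact) if it is exact at every degree. -/
def Acyclic (R : Type u) [Ring R] (C : Cx R) : Prop :=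
  ∀ (n : ℤ) (x : C.X n), C.d n (n - 1) x = 0 → ∃ y : C.X (n + 1), C.d (n + 1) n y = x

/-- The `n`-th cycle submodule `Z_n(C) = ker (d_n : C_n → C_{n-1})`. -/
def cycles (R : Type u) [Ring R] (C : Cx R) (n : ℤ) : Submodule R (C.X n) :=
  LinearMap.ker (C.d n (n - 1)).hom

/-- A module `M` is `𝒜`-periodic if there is a short exact sequence `0 → M → A → M → 0`
with `A ∈ 𝒜`. -/
def IsPeriodic (R : Type u) [Ring R]
    (𝒜 : (M : Type u) → [AddCommGroup M] → [Module R M] → Prop)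
    (M : Type u) [AddCommGroup M] [Module R M] : Prop :=
  ∃ (A : ModuleCat.{u} R) (i : M →ₗ[R] A) (p : A →ₗ[R] M),
    𝒜 A ∧ Function.Injective i ∧ Function.Surjective p ∧
      LinearMap.ker p = LinearMap.range i

open DirectSum

theorem _root_.DirectSum.ker_lmap_eq_range_lmap {R ι : Type*} [Ring R] {M N P : ι → Type*}
    [∀ i, AddCommGroup (M i)] [∀ i, Module R (M i)] [∀ i, AddCommGroup (N i)]
    [∀ i, Module R (N i)] [∀ i, AddCommGroup (P i)] [∀ i, Module R (P i)]
    {f : ∀ i, M i →ₗ[R] N i} {g : ∀ i, N i →ₗ[R] P i}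
    (h : ∀ i, LinearMap.ker (g i) = LinearMap.range (f i)) :
    LinearMap.ker (lmap g) = LinearMap.range (lmap f) := by
  simp only [ker_lmap, range_lmap, h]

variable {R : Type u} [Ring R]

section PeriodicComplex

variable (A : ModuleCat.{u} R) (f : A →ₗ[R] A) (hf : f ∘ₗ f = 0)

-- Reducible, so that the components `(periodicComplex A f hf).X n` are seen to be `A`
-- by instance search.
noncomputable abbrev periodicComplex : Cx R :=
  ChainComplex.of (fun _ => A) (fun _ => ModuleCat.ofHom f)
    (fun _ => by rw [← ModuleCat.ofHom_comp, hf]; rfl)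

variable {A f hf}

theorem periodicComplex_d {i j : ℤ} (h : j + 1 = i) :
    (periodicComplex A f hf).d i j = ModuleCat.ofHom f := by
  subst h
  exact ChainComplex.of_d (fun _ => A) (fun _ => ModuleCat.ofHom f) j

theorem cycles_periodicComplex (n : ℤ) :
    cycles R (periodicComplex A f hf) n = LinearMap.ker f := by
  rw [cycles, periodicComplex_d (by ring)]
  rfl

theorem acyclic_periodicComplex (h : LinearMap.ker f = LinearMap.range f) :
    Acyclic R (periodicComplex A f hf) := by
  intro n x hx
  rw [periodicComplex_d (by ring)] at hx
  obtain ⟨y, rfl⟩ : x ∈ LinearMap.range f := h ▸ hx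
  exact ⟨y, by rw [periodicComplex_d rfl]; rfl⟩

end PeriodicComplex

theorem IsPeriodic.exists_acyclic {𝒜 : (M : Type u) → [AddCommGroup M] → [Module R M] → Prop}
    {M : Type u} [AddCommGroup M] [Module R M] (hM : IsPeriodic R 𝒜 M) :
    ∃ C : Cx R, Acyclic R C ∧ (∀ n, 𝒜 (C.X n)) ∧ Nonempty (cycles R C 0 ≃ₗ[R] M) := by
  obtain ⟨A, i, p, hA, hi, hp, hexact⟩ := hM
  have hpi : p ∘ₗ i = 0 := LinearMap.range_le_ker_iff.1 hexact.ge
  have hsq : (i ∘ₗ p) ∘ₗ (i ∘ₗ p) = 0 := by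
    rw [LinearMap.comp_assoc, ← LinearMap.comp_assoc p, hpi, LinearMap.zero_comp,
      LinearMap.comp_zero]
  have hker : LinearMap.ker (i ∘ₗ p) = LinearMap.range i := by
    rw [LinearMap.ker_comp_of_ker_eq_bot _ (LinearMap.ker_eq_bot.2 hi), hexact]
  have hrange : LinearMap.range (i ∘ₗ p) = LinearMap.range i :=
    LinearMap.range_comp_of_range_eq_top _ (LinearMap.range_eq_top.2 hp)
  refine ⟨periodicComplex A _ hsq, acyclic_periodicComplex (hker.trans hrange.symm),
    fun _ => hA, ⟨?_⟩⟩
  exact (LinearEquiv.ofEq _ _ ((cycles_periodicComplex 0).trans hker)).trans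
    (LinearEquiv.ofInjective i hi).symm

section Cycles

variable (C : Cx R)

theorem d_mem_cycles (n : ℤ) (x : C.X n) : C.d n (n - 1) x ∈ cycles R C (n - 1) := by
  rw [cycles, LinearMap.mem_ker, ← LinearMap.comp_apply, ← ModuleCat.hom_comp, C.d_comp_d]
  rfl

noncomputable def dToCycles (n : ℤ) : C.X n →ₗ[R] cycles R C (n - 1) :=
  (C.d n (n - 1)).hom.codRestrict _ (d_mem_cycles C n)

theorem ker_dToCycles (n : ℤ) :
    LinearMap.ker (dToCycles C n) = LinearMap.range (cycles R C n).subtype := by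
  rw [dToCycles, LinearMap.ker_codRestrict, Submodule.range_subtype]
  rfl

variable {C}

theorem Acyclic.surjective_dToCycles (hC : Acyclic R C) (n : ℤ) :
    Function.Surjective (dToCycles C n) := by
  have hexact : ∀ x : C.X (n - 1), x ∈ cycles R C (n - 1) → ∃ y, C.d n (n - 1) y = x := by
    generalize hk : n - 1 = k
    obtain rfl : n = k + 1 := by omega
    exact hC k
  rintro ⟨x, hx⟩
  obtain ⟨y, hy⟩ := hexact x hx
  exact ⟨y, Subtype.ext hy⟩

end Cycles

-- Indexing by `ULift ℤ` keeps these direct sums in `Type u`.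
theorem isPeriodic_directSum_cycles
    {𝒜 : (M : Type u) → [AddCommGroup M] → [Module R M] → Prop} {C : Cx R}
    (hC : Acyclic R C) (hA : 𝒜 (⨁ n : ULift.{u} ℤ, C.X n.down)) :
    IsPeriodic R 𝒜 (⨁ n : ULift.{u} ℤ, cycles R C n.down) := by
  let shift : (⨁ n : ULift.{u} ℤ, cycles R C (n.down - 1)) ≃ₗ[R]
      ⨁ n : ULift.{u} ℤ, cycles R C n.down :=
    (lequivCongrLeft R (M := fun n : ULift.{u} ℤ => cycles R C n.down)
      (Equiv.subRight 1).symm).symm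
  refine ⟨ModuleCat.of R _, lmap fun n => (cycles R C n.down).subtype,
    shift ∘ₗ lmap fun n => dToCycles C n.down, hA,
    (lmap_injective _).2 fun _ => Subtype.val_injective, ?_, ?_⟩
  · exact shift.surjective.comp ((lmap_surjective _).2 fun n => hC.surjective_dToCycles n.down)
  · rw [LinearEquiv.ker_comp]
    exact ker_lmap_eq_range_lmap fun n => ker_dToCycles C n.down

theorem statement0_general (R : Type u) [Ring R]
    (𝒜 ℬ : (M : Type u) → [AddCommGroup M] → [Module R M] → Prop)
    (hAsum : ∀ (ι : Type u) (M : ι → Type u) [∀ i, AddCommGroup (M i)]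
      [∀ i, Module R (M i)], (∀ i, 𝒜 (M i)) → 𝒜 (DirectSum ι M))
    (hBiso : ∀ (M N : Type u) [AddCommGroup M] [Module R M] [AddCommGroup N] [Module R N],
      (M ≃ₗ[R] N) → ℬ M → ℬ N)
    (hBsummand : ∀ (M N : Type u) [AddCommGroup M] [Module R M] [AddCommGroup N]
      [Module R N] (i : N →ₗ[R] M) (r : M →ₗ[R] N),
      (∀ x : N, r (i x) = x) → ℬ M → ℬ N) :
    (∀ C : Cx R, Acyclic R C → (∀ n : ℤ, 𝒜 (C.X n)) → ∀ n : ℤ, ℬ (cycles R C n)) ↔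
      (∀ (M : Type u) [AddCommGroup M] [Module R M], IsPeriodic R 𝒜 M → ℬ M) := by
  constructor
  · intro h M _ _ hM
    obtain ⟨C, hC, hCA, ⟨e⟩⟩ := hM.exists_acyclic
    exact hBiso _ _ e (h C hC hCA 0)
  · intro h C hC hCA n
    have hsum := h _ (isPeriodic_directSum_cycles hC (hAsum _ _ fun k => hCA k.down))
    exact hBsummand _ _ _ _
      (component.lof_self R (M := fun k : ULift.{u} ℤ => cycles R C k.down) ⟨n⟩) hsum

theorem statement0 (R : Type u) [Ring R]
    (𝒜 ℬ : (M : Type u) → [AddCommGroup M] → [Module R M] → Prop)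
    (hAiso : ∀ (M N : Type u) [AddCommGroup M] [Module R M] [AddCommGroup N] [Module R N],
      (M ≃ₗ[R] N) → 𝒜 M → 𝒜 N)
    (hAsum : ∀ (ι : Type u) (M : ι → Type u) [∀ i, AddCommGroup (M i)]
      [∀ i, Module R (M i)], (∀ i, 𝒜 (M i)) → 𝒜 (DirectSum ι M))
    (hBiso : ∀ (M N : Type u) [AddCommGroup M] [Module R M] [AddCommGroup N] [Module R N],
      (M ≃ₗ[R] N) → ℬ M → ℬ N)
    (hBsummand : ∀ (M N : Type u) [AddCommGroup M] [Module R M] [AddCommGroup N]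
      [Module R N] (i : N →ₗ[R] M) (r : M →ₗ[R] N),
      (∀ x : N, r (i x) = x) → ℬ M → ℬ N) :
    (∀ C : Cx R, Acyclic R C → (∀ n : ℤ, 𝒜 (C.X n)) → ∀ n : ℤ, ℬ (cycles R C n)) ↔
      (∀ (M : Type u) [AddCommGroup M] [Module R M], IsPeriodic R 𝒜 M → ℬ M) :=
  statement0_general R 𝒜 ℬ hAsum hBiso hBsummand

end TotallyAcyclicPaper
end

section
/- Let R be a ring, and let 𝒜 ⊆ ℬ be classes of left R-modules closed under isomorphisms, where ℬ is closed under direct summands and extensions, both 𝒜 and ℬ are closed under arbitrary direct sums, and every module in ℬ occurs as a cycle of some acyclic complex all of whose components are in 𝒜. Then the following are equivalent: (1) the cycles of every acyclic complex with all components in 𝒜 belong to ℬ; (2) the cycles of every acyclic complex with all components in ℬ belong to ℬ; (3) every 𝒜-periodic module belongs to ℬ; (4) every ℬ-periodic module belongs to ℬ. -/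
open CategoryTheory

universe u

namespace TotallyAcyclicPaper

/-!
(1) ⇒ (3): if `0 → M →i A →p M → 0` is exact, the constant complex `⋯ → A → A → ⋯` with
differential `i ∘ p` is acyclic and its cycles are `M`. (3) ⇒ (1): the short exact sequences
`0 → Z_{n+1} → C_{n+1} → Z_n → 0` of an acyclic complex add up to a short exact sequence
`0 → ⨁ Z → ⨁ C → ⨁ Z → 0` after reindexing, so `⨁ Z` is periodic and each `Z_n` is a summand
of it. The same arguments give (2) ⇔ (4), and (4) ⇒ (3) since `𝒜 ⊆ ℬ`.

(1) ⇒ (4): a `ℬ`-periodic module `M` is spliced, in both directions, into a `ℤ`-indexed family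
of short exact sequences `0 → X_{n+1} → A_n → X_n → 0` with `A_n ∈ 𝒜`, `X_0 = M` and every
`X_n` again `ℬ`-periodic; summing them as above exhibits `M` as a summand of an `𝒜`-periodic
module. One splicing step starts from `0 → X → P → X → 0` with `P ∈ ℬ`, writes `P` as a cycle of
an acyclic `𝒜`-complex, so `P ↪ A ↠ W` with `A ∈ 𝒜` and `W ∈ ℬ` by (1), and takes
`X' = A / X`; a horseshoe construction over `X ↪ A` shows that `X'` is `ℬ`-periodic with middle
term an extension of `W` by `A`. The other direction is dual.
-/

open Function LinearMap

variable {R : Type u} [Ring R]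

abbrev ModuleClass (R : Type u) [Ring R] :=
  (M : Type u) → [AddCommGroup M] → [Module R M] → Prop

section Classes

variable (𝒞 ℬ : ModuleClass R)

def ClosedUnderSummands : Prop :=
  ∀ (M N : Type u) [AddCommGroup M] [Module R M] [AddCommGroup N] [Module R N]
    (i : N →ₗ[R] M) (r : M →ₗ[R] N), (∀ x : N, r (i x) = x) → ℬ M → ℬ N

def ClosedUnderExtensions : Prop :=
  ∀ (A B C : Type u) [AddCommGroup A] [Module R A] [AddCommGroup B] [Module R B]
    [AddCommGroup C] [Module R C] (i : A →ₗ[R] B) (p : B →ₗ[R] C),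
    Injective i → Surjective p → ker p = range i → ℬ A → ℬ C → ℬ B

def ClosedUnderDirectSums : Prop :=
  ∀ (ι : Type u) (M : ι → Type u) [∀ i, AddCommGroup (M i)] [∀ i, Module R (M i)],
    (∀ i, 𝒞 (M i)) → 𝒞 (DirectSum ι M)

def CyclesMem : Prop :=
  ∀ C : Cx R, Acyclic R C → (∀ n : ℤ, 𝒞 (C.X n)) → ∀ n : ℤ, ℬ (cycles R C n)

def PeriodicMem : Prop :=
  ∀ (M : Type u) [AddCommGroup M] [Module R M], IsPeriodic R 𝒞 M → ℬ M

def IsSyzygy (X Y : Type u) [AddCommGroup X] [Module R X] [AddCommGroup Y] [Module R Y] :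
    Prop :=
  ∃ (A : ModuleCat.{u} R) (i : X →ₗ[R] A) (p : A →ₗ[R] Y),
    𝒞 A ∧ Injective i ∧ Surjective p ∧ ker p = range i

end Classes

variable {𝒜 ℬ 𝒞 : ModuleClass R}

theorem ClosedUnderSummands.of_linearEquiv (hs : ClosedUnderSummands ℬ)
    {M N : Type u} [AddCommGroup M] [Module R M] [AddCommGroup N] [Module R N]
    (e : M ≃ₗ[R] N) (hM : ℬ M) : ℬ N :=
  hs M N e.symm e e.apply_symm_apply hM

theorem ClosedUnderSummands.of_directSum (hs : ClosedUnderSummands ℬ) {ι : Type u}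
    {M : ι → Type u} [∀ i, AddCommGroup (M i)] [∀ i, Module R (M i)]
    (h : ℬ (DirectSum ι M)) (i : ι) : ℬ (M i) := by
  classical
  exact hs _ _ (DirectSum.lof R ι M i) (DirectSum.component R ι M i)
    (DirectSum.component.lof_self R i) h

theorem IsPeriodic.mono (h𝒜ℬ : ∀ (M : Type u) [AddCommGroup M] [Module R M], 𝒜 M → ℬ M)
    {M : Type u} [AddCommGroup M] [Module R M] (hM : IsPeriodic R 𝒜 M) : IsPeriodic R ℬ M :=
  let ⟨A, i, p, hA, hi, hp, hip⟩ := hM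
  ⟨A, i, p, h𝒜ℬ A hA, hi, hp, hip⟩

section IsSyzygy

variable {X X' Y Y' : Type u} [AddCommGroup X] [Module R X] [AddCommGroup X'] [Module R X']
  [AddCommGroup Y] [Module R Y] [AddCommGroup Y'] [Module R Y']

theorem IsSyzygy.of_linearEquiv_left (h : IsSyzygy 𝒞 X Y) (e : X' ≃ₗ[R] X) :
    IsSyzygy 𝒞 X' Y := by
  obtain ⟨A, i, p, hA, hi, hp, hip⟩ := h
  exact ⟨A, i ∘ₗ e, p, hA, hi.comp e.injective, hp, by rw [hip, LinearEquiv.range_comp]⟩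

theorem IsSyzygy.of_linearEquiv_right (h : IsSyzygy 𝒞 X Y) (e : Y ≃ₗ[R] Y') :
    IsSyzygy 𝒞 X Y' := by
  obtain ⟨A, i, p, hA, hi, hp, hip⟩ := h
  exact ⟨A, i, e ∘ₗ p, hA, hi, e.surjective.comp hp, by rw [LinearEquiv.ker_comp, hip]⟩

end IsSyzygy

theorem isPeriodic_directSum {ι : Type u} (σ : ι ≃ ι) {X T : ι → Type u}
    [∀ k, AddCommGroup (X k)] [∀ k, Module R (X k)] [∀ k, AddCommGroup (T k)]
    [∀ k, Module R (T k)] (f : ∀ k, X (σ k) →ₗ[R] T k) (g : ∀ k, T k →ₗ[R] X k)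
    (hf : ∀ k, Injective (f k)) (hg : ∀ k, Surjective (g k))
    (hfg : ∀ k, ker (g k) = range (f k)) (hT : 𝒞 (DirectSum ι T)) :
    IsPeriodic R 𝒞 (DirectSum ι X) := by
  let e : DirectSum ι X ≃ₗ[R] DirectSum ι (fun k => X (σ k)) :=
    DirectSum.lequivCongrLeft R σ.symm
  refine ⟨ModuleCat.of R (DirectSum ι T), DirectSum.lmap f ∘ₗ e, DirectSum.lmap g, hT,
    ((DirectSum.lmap_injective f).mpr hf).comp e.injective,
    (DirectSum.lmap_surjective g).mpr hg, ?_⟩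
  rw [LinearEquiv.range_comp, DirectSum.ker_lmap, DirectSum.range_lmap]
  simp only [hfg]

theorem mem_of_forall_isSyzygy (hsum : ClosedUnderDirectSums 𝒞) (hs : ClosedUnderSummands ℬ)
    (hper : PeriodicMem 𝒞 ℬ) {X : ℤ → ModuleCat.{u} R}
    (hX : ∀ n, IsSyzygy 𝒞 (X (n + 1)) (X n)) (n : ℤ) : ℬ (X n) := by
  choose A f g hA hf hg hfg using hX
  let σ : ULift.{u} ℤ ≃ ULift.{u} ℤ :=
    ⟨fun k => ⟨k.down + 1⟩, fun k => ⟨k.down - 1⟩, fun k => by simp, fun k => by simp⟩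
  have hsumX : IsPeriodic R 𝒞 (DirectSum (ULift.{u} ℤ) fun k => X k.down) :=
    isPeriodic_directSum σ (fun k => f k.down) (fun k => g k.down) (fun k => hf k.down)
      (fun k => hg k.down) (fun k => hfg k.down) (hsum _ _ fun k => hA k.down)
  exact hs.of_directSum (hper _ hsumX) ⟨n⟩

section Complexes

theorem d_d_apply (C : Cx R) (i j k : ℤ) (x : C.X i) :
    (C.d j k).hom ((C.d i j).hom x) = 0 :=
  LinearMap.congr_fun (congrArg ModuleCat.Hom.hom (C.d_comp_d i j k)) x

theorem isSyzygy_cycles {C : Cx R} (hC : Acyclic R C) {n : ℤ} (hn : 𝒞 (C.X (n + 1))) :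
    IsSyzygy 𝒞 (cycles R C (n + 1)) (cycles R C n) := by
  refine ⟨C.X (n + 1), (cycles R C (n + 1)).subtype,
    (C.d (n + 1) n).hom.codRestrict (cycles R C n)
      (fun x => show _ ∈ cycles R C n from d_d_apply C _ _ _ x),
    hn, Subtype.val_injective, fun ⟨x, hx⟩ => ?_, ?_⟩
  · obtain ⟨y, hy⟩ := hC n x hx
    exact ⟨y, Subtype.ext hy⟩
  · rw [ker_codRestrict, Submodule.range_subtype, cycles, add_sub_cancel_right]

variable {A : ModuleCat.{u} R} (d : A ⟶ A) (hd : d ≫ d = 0)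

abbrev constComplex : Cx R :=
  ChainComplex.of (fun _ => A) (fun _ => d) (fun _ => hd)

theorem constComplex_d {i j : ℤ} (h : j + 1 = i) : (constComplex d hd).d i j = d := by
  subst h
  exact ChainComplex.of_d (fun _ => A) (fun _ => d) j

theorem acyclic_constComplex (h : ker d.hom ≤ range d.hom) :
    Acyclic R (constComplex d hd) := by
  intro n x hx
  rw [constComplex_d d hd (sub_add_cancel n 1)] at hx
  obtain ⟨y, hy⟩ := h hx
  exact ⟨y, by rwa [constComplex_d d hd rfl]⟩

end Complexes

theorem periodicMem_of_cyclesMem (hs : ClosedUnderSummands ℬ) (h : CyclesMem 𝒞 ℬ) :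
    PeriodicMem 𝒞 ℬ := by
  intro M _ _ ⟨A, i, p, hA, hi, hp, hip⟩
  let d : A ⟶ A := ModuleCat.ofHom (i ∘ₗ p)
  have hker : ker d.hom = range i := by
    rw [ModuleCat.hom_ofHom, ker_comp_of_ker_eq_bot _ (ker_eq_bot.mpr hi), hip]
  have hrange : range d.hom = range i :=
    range_comp_of_range_eq_top _ (range_eq_top.mpr hp)
  have hpi : ∀ y, p (i y) = 0 := fun y => congr($(range_le_ker_iff.mp hip.ge) y)
  have hd : d ≫ d = 0 := by
    ext x
    simp [d, hpi]
  have hZ := h _ (acyclic_constComplex d hd (hker.trans hrange.symm).le) (fun _ => hA) 0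
  rw [cycles, constComplex_d d hd (sub_add_cancel 0 1), hker] at hZ
  exact hs.of_linearEquiv (LinearEquiv.ofInjective i hi).symm hZ

theorem cyclesMem_of_periodicMem (hsum : ClosedUnderDirectSums 𝒞) (hs : ClosedUnderSummands ℬ)
    (h : PeriodicMem 𝒞 ℬ) : CyclesMem 𝒞 ℬ :=
  fun C hC hA n => mem_of_forall_isSyzygy hsum hs h
    (X := fun n => ModuleCat.of R (cycles R C n)) (fun n => isSyzygy_cycles hC (hA (n + 1))) n

theorem exists_int_chain {α : Type*} {P : α → Prop} {r : α → α → Prop}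
    (hsucc : ∀ x, P x → ∃ y, P y ∧ r x y) (hpred : ∀ x, P x → ∃ y, P y ∧ r y x)
    {a : α} (ha : P a) : ∃ f : ℤ → α, f 0 = a ∧ ∀ n, r (f n) (f (n + 1)) := by
  choose! s hsP hs using hsucc
  choose! t htP ht using hpred
  have hsP' (k : ℕ) : P (s^[k] a) := Function.Iterate.rec P ha hsP k
  have htP' (k : ℕ) : P (t^[k] a) := Function.Iterate.rec P ha htP k
  refine ⟨fun | (k : ℕ) => s^[k] a | Int.negSucc k => t^[k + 1] a, rfl, ?_⟩
  rintro (k | _ | k)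
  · show r (s^[k] a) (s^[k + 1] a)
    rw [Function.iterate_succ_apply']
    exact hs _ (hsP' k)
  · exact ht a ha
  · show r (t^[k + 2] a) (t^[k + 1] a)
    rw [Function.iterate_succ_apply' t (k + 1)]
    exact ht _ (htP' (k + 1))

section Horseshoe

variable {X P A K W : Type u} [AddCommGroup X] [Module R X] [AddCommGroup P] [Module R P]
  [AddCommGroup A] [Module R A] [AddCommGroup K] [Module R K] [AddCommGroup W] [Module R W]

/- Horseshoe over `0 → X →i P →p X → 0`: for `a : P ↪ A`, the map `P → A × A`,
`y ↦ (a y, a (i (p y)))`, lies over `a ∘ i : X ↪ A` at both ends, so its cokernel is an extension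
of `A / X` by itself and, via the second factor, of `coker a` by `A`. Dually, for `q : A ↠ P`,
the kernel of `A × A → P`, `(b₁, b₂) ↦ q b₁ + i (p (q b₂))`. -/

theorem ClosedUnderExtensions.quotient_range_prod_mem (hext : ClosedUnderExtensions ℬ)
    {a : P →ₗ[R] A} (g : P →ₗ[R] A) {w : A →ₗ[R] W} (ha : Injective a) (hw : Surjective w)
    (haw : ker w = range a) (hA : ℬ A) (hW : ℬ W) : ℬ ((A × A) ⧸ range (a.prod g)) := by
  set N := range (a.prod g)
  have hN : N ≤ ker (w ∘ₗ fst R A A) := by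
    rintro _ ⟨y, rfl⟩
    exact haw.ge ⟨y, rfl⟩
  refine hext A _ W (N.mkQ ∘ₗ inr R A A) (N.liftQ _ hN) (fun b b' hbb' => ?_)
    (fun c => ?_) (le_antisymm (fun t ht => ?_) (range_le_ker_iff.mpr ?_)) hA hW
  · obtain ⟨y, hy⟩ := (Submodule.Quotient.eq N).mp hbb'
    obtain rfl : y = 0 := ha (by simpa using congr($hy.1))
    simpa [sub_eq_zero, eq_comm] using congr($hy.2)
  · obtain ⟨b, rfl⟩ := hw c
    exact ⟨N.mkQ (b, 0), rfl⟩
  · obtain ⟨⟨b₁, b₂⟩, rfl⟩ := N.mkQ_surjective t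
    obtain ⟨y, hy⟩ := haw.le ht
    refine ⟨b₂ - g y, (Submodule.Quotient.eq N).mpr ⟨-y, ?_⟩⟩
    simp [hy]
  · ext b
    simp

theorem isPeriodic_quotient_range_comp {i : X →ₗ[R] P} {p : P →ₗ[R] X} {a : P →ₗ[R] A}
    (hi : Injective i) (hp : Surjective p) (hip : ker p = range i) (ha : Injective a)
    (hE : 𝒞 ((A × A) ⧸ range (a.prod (a ∘ₗ i ∘ₗ p)))) :
    IsPeriodic R 𝒞 (A ⧸ range (a ∘ₗ i)) := by
  set N := range (a.prod (a ∘ₗ i ∘ₗ p))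
  set L := range (a ∘ₗ i)
  have hpi : ∀ x, p (i x) = 0 := fun x => hip.ge ⟨x, rfl⟩
  have hL : L ≤ ker (N.mkQ ∘ₗ inl R A A) := by
    rintro _ ⟨x, rfl⟩
    exact (Submodule.Quotient.mk_eq_zero N).mpr ⟨i x, by simp [hpi]⟩
  have hN : N ≤ ker (L.mkQ ∘ₗ snd R A A) := by
    rintro _ ⟨y, rfl⟩
    exact (Submodule.Quotient.mk_eq_zero L).mpr ⟨p y, rfl⟩
  refine ⟨ModuleCat.of R ((A × A) ⧸ N), L.liftQ _ hL, N.liftQ _ hN, hE, ?_, fun t => ?_,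
    le_antisymm (fun t ht => ?_) (range_le_ker_iff.mpr ?_)⟩
  · rw [← ker_eq_bot, eq_bot_iff]
    intro t ht
    obtain ⟨b, rfl⟩ := L.mkQ_surjective t
    obtain ⟨y, hy⟩ := (Submodule.Quotient.mk_eq_zero N).mp ht
    obtain ⟨x, rfl⟩ : y ∈ range i := hip.le (hi (ha (by simpa using congr($hy.2))))
    exact (Submodule.Quotient.mk_eq_zero L).mpr ⟨x, congr($hy.1)⟩
  · obtain ⟨b, rfl⟩ := L.mkQ_surjective t
    exact ⟨N.mkQ (0, b), rfl⟩
  · obtain ⟨⟨b₁, b₂⟩, rfl⟩ := N.mkQ_surjective t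
    obtain ⟨x, hx⟩ := (Submodule.Quotient.mk_eq_zero L).mp ht
    obtain ⟨y, rfl⟩ := hp x
    refine ⟨L.mkQ (b₁ - a y), (Submodule.Quotient.eq N).mpr ⟨-y, ?_⟩⟩
    simpa using hx
  · ext b
    simp

theorem ClosedUnderExtensions.ker_coprod_mem (hext : ClosedUnderExtensions ℬ)
    {k : K →ₗ[R] A} {q : A →ₗ[R] P} (g : A →ₗ[R] P) (hk : Injective k) (hq : Surjective q)
    (hkq : ker q = range k) (hK : ℬ K) (hA : ℬ A) : ℬ (ker (q.coprod g)) := by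
  set Q := ker (q.coprod g)
  have hqk : ∀ c, q (k c) = 0 := fun c => hkq.ge ⟨c, rfl⟩
  refine hext K Q A (codRestrict Q (inl R A A ∘ₗ k) fun c => by simp [Q, hqk])
    (snd R A A ∘ₗ Q.subtype) (fun c c' h => hk congr(($h).1.1)) (fun b => ?_)
    (le_antisymm (fun t h => ?_) (range_le_ker_iff.mpr ?_)) hK hA
  · obtain ⟨b', hb'⟩ := hq (-g b)
    exact ⟨⟨(b', b), by simp [Q, hb']⟩, rfl⟩
  · obtain ⟨⟨b₁, b₂⟩, hb⟩ := t
    obtain rfl : b₂ = 0 := h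
    obtain ⟨c, rfl⟩ := hkq.le (by simpa [Q] using hb)
    exact ⟨c, rfl⟩
  · ext c
    rfl

theorem isPeriodic_ker_comp {i : X →ₗ[R] P} {p : P →ₗ[R] X} {q : A →ₗ[R] P}
    (hi : Injective i) (hp : Surjective p) (hip : ker p = range i) (hq : Surjective q)
    (hE : 𝒞 (ker (q.coprod (i ∘ₗ p ∘ₗ q)))) : IsPeriodic R 𝒞 (ker (p ∘ₗ q)) := by
  set Q := ker (q.coprod (i ∘ₗ p ∘ₗ q))
  set L := ker (p ∘ₗ q)
  have hpi : ∀ x, p (i x) = 0 := fun x => hip.ge ⟨x, rfl⟩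
  refine ⟨ModuleCat.of R Q, codRestrict Q (inr R A A ∘ₗ L.subtype) fun b => ?_,
    codRestrict L (fst R A A ∘ₗ Q.subtype) fun b => ?_, hE, fun b b' h => ?_, fun b => ?_,
    le_antisymm (fun t h => ?_) (range_le_ker_iff.mpr ?_)⟩
  · simp [Q, show p (q b) = 0 from b.2]
  · simpa [L, hpi] using congr(p $(show q b.1.1 + i (p (q b.1.2)) = 0 from b.2))
  · exact Subtype.ext congr(($h).1.2)
  · obtain ⟨x, hx⟩ : q b ∈ range i := hip.le b.2
    obtain ⟨b', hb'⟩ : ∃ b', p (q b') = -x := hp.comp hq (-x)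
    exact ⟨⟨(b, b'), by simp [Q, ← hx, hb']⟩, Subtype.ext rfl⟩
  · obtain ⟨⟨b₁, b₂⟩, hb⟩ := t
    obtain rfl : b₁ = 0 := congr(($h).1)
    have hb₂ : b₂ ∈ L := hi (by simpa [Q] using hb)
    exact ⟨⟨b₂, hb₂⟩, rfl⟩
  · ext b
    rfl

end Horseshoe

section Splicing

variable {X P : Type u} [AddCommGroup X] [Module R X] [AddCommGroup P] [Module R P]

theorem IsPeriodic.exists_cosyzygy
    (h𝒜ℬ : ∀ (M : Type u) [AddCommGroup M] [Module R M], 𝒜 M → ℬ M)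
    (hext : ClosedUnderExtensions ℬ)
    (hemb : ∀ (N : Type u) [AddCommGroup N] [Module R N], ℬ N →
      ∃ W : ModuleCat.{u} R, ℬ W ∧ IsSyzygy 𝒜 N W)
    (hX : IsPeriodic R ℬ X) : ∃ Y : ModuleCat.{u} R, IsPeriodic R ℬ Y ∧ IsSyzygy 𝒜 X Y := by
  obtain ⟨P, i, p, hP, hi, hp, hip⟩ := hX
  obtain ⟨W, hW, A, a, w, hA, ha, hw, haw⟩ := hemb P hP
  exact ⟨ModuleCat.of R (A ⧸ range (a ∘ₗ i)),
    isPeriodic_quotient_range_comp hi hp hip ha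
      (hext.quotient_range_prod_mem _ ha hw haw (h𝒜ℬ A hA) hW),
    A, a ∘ₗ i, Submodule.mkQ _, hA, ha.comp hi, Submodule.mkQ_surjective _,
    Submodule.ker_mkQ _⟩

theorem IsPeriodic.exists_syzygy
    (h𝒜ℬ : ∀ (M : Type u) [AddCommGroup M] [Module R M], 𝒜 M → ℬ M)
    (hext : ClosedUnderExtensions ℬ)
    (hquot : ∀ (N : Type u) [AddCommGroup N] [Module R N], ℬ N →
      ∃ K : ModuleCat.{u} R, ℬ K ∧ IsSyzygy 𝒜 K N)
    (hX : IsPeriodic R ℬ X) : ∃ Y : ModuleCat.{u} R, IsPeriodic R ℬ Y ∧ IsSyzygy 𝒜 Y X := by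
  obtain ⟨P, i, p, hP, hi, hp, hip⟩ := hX
  obtain ⟨K, hK, A, k, q, hA, hk, hq, hkq⟩ := hquot P hP
  exact ⟨ModuleCat.of R (ker (p ∘ₗ q)),
    isPeriodic_ker_comp hi hp hip hq (hext.ker_coprod_mem _ hk hq hkq hK (h𝒜ℬ A hA)),
    A, Submodule.subtype _, p ∘ₗ q, hA, Subtype.val_injective, hp.comp hq,
    (Submodule.range_subtype _).symm⟩

theorem CyclesMem.exists_cosyzygy_mem (h : CyclesMem 𝒜 ℬ) {C : Cx R} (hC : Acyclic R C)
    (hA : ∀ n, 𝒜 (C.X n)) {n : ℤ} (e : P ≃ₗ[R] cycles R C n) :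
    ∃ W : ModuleCat.{u} R, ℬ W ∧ IsSyzygy 𝒜 P W := by
  have hZ := isSyzygy_cycles hC (hA (n - 1 + 1))
  rw [sub_add_cancel] at hZ
  exact ⟨ModuleCat.of R (cycles R C (n - 1)), h C hC hA _, hZ.of_linearEquiv_left e⟩

theorem CyclesMem.exists_syzygy_mem (h : CyclesMem 𝒜 ℬ) {C : Cx R} (hC : Acyclic R C)
    (hA : ∀ n, 𝒜 (C.X n)) {n : ℤ} (e : P ≃ₗ[R] cycles R C n) :
    ∃ K : ModuleCat.{u} R, ℬ K ∧ IsSyzygy 𝒜 K P :=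
  ⟨ModuleCat.of R (cycles R C (n + 1)), h C hC hA _,
    (isSyzygy_cycles hC (hA (n + 1))).of_linearEquiv_right e.symm⟩

end Splicing

theorem periodicMem_self_of_cyclesMem
    (h𝒜ℬ : ∀ (M : Type u) [AddCommGroup M] [Module R M], 𝒜 M → ℬ M)
    (hs : ClosedUnderSummands ℬ) (hext : ClosedUnderExtensions ℬ)
    (hsum : ClosedUnderDirectSums 𝒜)
    (hcycle : ∀ (M : Type u) [AddCommGroup M] [Module R M], ℬ M →
      ∃ C : Cx R, Acyclic R C ∧ (∀ n : ℤ, 𝒜 (C.X n)) ∧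
        ∃ n : ℤ, Nonempty (M ≃ₗ[R] cycles R C n))
    (h : CyclesMem 𝒜 ℬ) : PeriodicMem ℬ ℬ := by
  intro M _ _ hM
  have hemb : ∀ (P : Type u) [AddCommGroup P] [Module R P], ℬ P →
      ∃ W : ModuleCat.{u} R, ℬ W ∧ IsSyzygy 𝒜 P W := fun P _ _ hP =>
    let ⟨_, hC, hA, _, ⟨e⟩⟩ := hcycle P hP
    h.exists_cosyzygy_mem hC hA e
  have hquot : ∀ (P : Type u) [AddCommGroup P] [Module R P], ℬ P →
      ∃ K : ModuleCat.{u} R, ℬ K ∧ IsSyzygy 𝒜 K P := fun P _ _ hP =>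
    let ⟨_, hC, hA, _, ⟨e⟩⟩ := hcycle P hP
    h.exists_syzygy_mem hC hA e
  obtain ⟨X, hX0, hX⟩ := exists_int_chain (P := fun X : ModuleCat.{u} R => IsPeriodic R ℬ X)
    (r := fun X Y => IsSyzygy 𝒜 Y X) (fun X hX => hX.exists_syzygy h𝒜ℬ hext hquot)
    (fun X hX => hX.exists_cosyzygy h𝒜ℬ hext hemb) (a := ModuleCat.of R M) hM
  have hX0ℬ := mem_of_forall_isSyzygy hsum hs (periodicMem_of_cyclesMem hs h) hX 0
  rwa [hX0] at hX0ℬ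

theorem statement1_general (R : Type u) [Ring R]
    (𝒜 ℬ : (M : Type u) → [AddCommGroup M] → [Module R M] → Prop)
    (hAB : ∀ (M : Type u) [AddCommGroup M] [Module R M], 𝒜 M → ℬ M)
    (hBsummand : ∀ (M N : Type u) [AddCommGroup M] [Module R M] [AddCommGroup N]
      [Module R N] (i : N →ₗ[R] M) (r : M →ₗ[R] N),
      (∀ x : N, r (i x) = x) → ℬ M → ℬ N)
    (hBext : ∀ (A B C : Type u) [AddCommGroup A] [Module R A] [AddCommGroup B] [Module R B]
      [AddCommGroup C] [Module R C] (i : A →ₗ[R] B) (p : B →ₗ[R] C),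
      Function.Injective i → Function.Surjective p →
      LinearMap.ker p = LinearMap.range i → ℬ A → ℬ C → ℬ B)
    (hAsum : ∀ (ι : Type u) (M : ι → Type u) [∀ i, AddCommGroup (M i)]
      [∀ i, Module R (M i)], (∀ i, 𝒜 (M i)) → 𝒜 (DirectSum ι M))
    (hBsum : ∀ (ι : Type u) (M : ι → Type u) [∀ i, AddCommGroup (M i)]
      [∀ i, Module R (M i)], (∀ i, ℬ (M i)) → ℬ (DirectSum ι M))
    (hcycle : ∀ (M : Type u) [AddCommGroup M] [Module R M], ℬ M →
      ∃ C : Cx R, Acyclic R C ∧ (∀ n : ℤ, 𝒜 (C.X n)) ∧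
        ∃ n : ℤ, Nonempty (M ≃ₗ[R] cycles R C n)) :
    List.TFAE
      [∀ C : Cx R, Acyclic R C → (∀ n : ℤ, 𝒜 (C.X n)) → ∀ n : ℤ, ℬ (cycles R C n),
       ∀ C : Cx R, Acyclic R C → (∀ n : ℤ, ℬ (C.X n)) → ∀ n : ℤ, ℬ (cycles R C n),
       ∀ (M : Type u) [AddCommGroup M] [Module R M], IsPeriodic R 𝒜 M → ℬ M,
       ∀ (M : Type u) [AddCommGroup M] [Module R M], IsPeriodic R ℬ M → ℬ M] := by
  tfae_have 1 → 3 := periodicMem_of_cyclesMem hBsummand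
  tfae_have 3 → 1 := cyclesMem_of_periodicMem hAsum hBsummand
  tfae_have 2 → 4 := periodicMem_of_cyclesMem hBsummand
  tfae_have 4 → 2 := cyclesMem_of_periodicMem hBsum hBsummand
  tfae_have 1 → 4 := periodicMem_self_of_cyclesMem hAB hBsummand hBext hAsum hcycle
  tfae_have 4 → 3 := fun h4 M _ _ hM => h4 M (hM.mono hAB)
  tfae_finish

theorem statement1 (R : Type u) [Ring R]
    (𝒜 ℬ : (M : Type u) → [AddCommGroup M] → [Module R M] → Prop)
    (hAiso : ∀ (M N : Type u) [AddCommGroup M] [Module R M] [AddCommGroup N] [Module R N],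
      (M ≃ₗ[R] N) → 𝒜 M → 𝒜 N)
    (hBiso : ∀ (M N : Type u) [AddCommGroup M] [Module R M] [AddCommGroup N] [Module R N],
      (M ≃ₗ[R] N) → ℬ M → ℬ N)
    (hAB : ∀ (M : Type u) [AddCommGroup M] [Module R M], 𝒜 M → ℬ M)
    (hBsummand : ∀ (M N : Type u) [AddCommGroup M] [Module R M] [AddCommGroup N]
      [Module R N] (i : N →ₗ[R] M) (r : M →ₗ[R] N),
      (∀ x : N, r (i x) = x) → ℬ M → ℬ N)
    (hBext : ∀ (A B C : Type u) [AddCommGroup A] [Module R A] [AddCommGroup B] [Module R B]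
      [AddCommGroup C] [Module R C] (i : A →ₗ[R] B) (p : B →ₗ[R] C),
      Function.Injective i → Function.Surjective p →
      LinearMap.ker p = LinearMap.range i → ℬ A → ℬ C → ℬ B)
    (hAsum : ∀ (ι : Type u) (M : ι → Type u) [∀ i, AddCommGroup (M i)]
      [∀ i, Module R (M i)], (∀ i, 𝒜 (M i)) → 𝒜 (DirectSum ι M))
    (hBsum : ∀ (ι : Type u) (M : ι → Type u) [∀ i, AddCommGroup (M i)]
      [∀ i, Module R (M i)], (∀ i, ℬ (M i)) → ℬ (DirectSum ι M))
    (hcycle : ∀ (M : Type u) [AddCommGroup M] [Module R M], ℬ M →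
      ∃ C : Cx R, Acyclic R C ∧ (∀ n : ℤ, 𝒜 (C.X n)) ∧
        ∃ n : ℤ, Nonempty (M ≃ₗ[R] cycles R C n)) :
    List.TFAE
      [∀ C : Cx R, Acyclic R C → (∀ n : ℤ, 𝒜 (C.X n)) → ∀ n : ℤ, ℬ (cycles R C n),
       ∀ C : Cx R, Acyclic R C → (∀ n : ℤ, ℬ (C.X n)) → ∀ n : ℤ, ℬ (cycles R C n),
       ∀ (M : Type u) [AddCommGroup M] [Module R M], IsPeriodic R 𝒜 M → ℬ M,
       ∀ (M : Type u) [AddCommGroup M] [Module R M], IsPeriodic R ℬ M → ℬ M] :=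
  statement1_general R 𝒜 ℬ hAB hBsummand hBext hAsum hBsum hcycle

end TotallyAcyclicPaper
end

section
/- Let R be a two-sided noetherian ring such that every acyclic complex of injective left R-modules is totally acyclic. Then for every Gorenstein injective left R-module G, the character module G⁺ = Hom_ℤ(G, ℚ/ℤ) is a Gorenstein flat right R-module. -/
open CategoryTheory

universe u

namespace TotallyAcyclicPaper

/-- An acyclic complex of injective modules is totally acyclic if `Hom(E,-)` leaves it
exact for every injective module `E`. -/
def TotallyAcyclicInj (R : Type u) [Ring R] (C : Cx R) : Prop :=
  Acyclic R C ∧ (∀ n : ℤ, Module.Injective R (C.X n)) ∧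
    ∀ (E : Type u) [AddCommGroup E] [Module R E], Module.Injective R E →
      ∀ (n : ℤ) (f : E →ₗ[R] C.X n), (∀ x : E, C.d n (n - 1) (f x) = 0) →
        ∃ g : E →ₗ[R] C.X (n + 1), ∀ x : E, C.d (n + 1) n (g x) = f x

/-- A module is Gorenstein injective if it is a cycle of a totally acyclic complex of
injective modules. -/
def IsGorensteinInj (R : Type u) [Ring R] (M : Type u) [AddCommGroup M] [Module R M] :
    Prop :=
  ∃ C : Cx R, TotallyAcyclicInj R C ∧ ∃ n : ℤ, Nonempty (M ≃ₗ[R] cycles R C n)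

/-- The subgroup of `M ⊗_ℤ N` by which one divides to obtain `M ⊗_R N`, for a right
`R`-module `M` and a left `R`-module `N`. -/
def trel (R : Type u) [Ring R] (M : Type u) [AddCommGroup M] [Module Rᵐᵒᵖ M]
    (N : Type u) [AddCommGroup N] [Module R N] : Submodule ℤ (TensorProduct ℤ M N) :=
  Submodule.span ℤ {x | ∃ (m : M) (r : R) (n : N),
    x = (MulOpposite.op r • m) ⊗ₜ[ℤ] n - m ⊗ₜ[ℤ] (r • n)}

/-- The tensor product `M ⊗_R N` of a right `R`-module `M` and a left `R`-module `N`
over a (not necessarily commutative) ring `R`. -/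
abbrev NCTensor (R : Type u) [Ring R] (M : Type u) [AddCommGroup M] [Module Rᵐᵒᵖ M]
    (N : Type u) [AddCommGroup N] [Module R N] : Type u :=
  TensorProduct ℤ M N ⧸ trel R M N

/-- Functoriality of `M ⊗_R -` in the second variable. -/
noncomputable def ncMapRight (R : Type u) [Ring R]
    (M : Type u) [AddCommGroup M] [Module Rᵐᵒᵖ M]
    {N N' : Type u} [AddCommGroup N] [Module R N] [AddCommGroup N'] [Module R N']
    (f : N →ₗ[R] N') : NCTensor R M N →ₗ[ℤ] NCTensor R M N' := by
  refine Submodule.mapQ _ _ (LinearMap.lTensor M f.toAddMonoidHom.toIntLinearMap) ?_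
  refine Submodule.span_le.2 ?_
  rintro x ⟨m, r, n, rfl⟩
  show LinearMap.lTensor M f.toAddMonoidHom.toIntLinearMap
      ((MulOpposite.op r • m) ⊗ₜ[ℤ] n - m ⊗ₜ[ℤ] (r • n)) ∈ trel R M N'
  refine Submodule.subset_span ⟨m, r, f n, ?_⟩
  simp

/-- Functoriality of `- ⊗_R N` in the first variable. -/
noncomputable def ncMapLeft (R : Type u) [Ring R]
    (N : Type u) [AddCommGroup N] [Module R N]
    {M M' : Type u} [AddCommGroup M] [Module Rᵐᵒᵖ M] [AddCommGroup M'] [Module Rᵐᵒᵖ M']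
    (f : M →ₗ[Rᵐᵒᵖ] M') : NCTensor R M N →ₗ[ℤ] NCTensor R M' N := by
  refine Submodule.mapQ _ _ (LinearMap.rTensor N f.toAddMonoidHom.toIntLinearMap) ?_
  refine Submodule.span_le.2 ?_
  rintro x ⟨m, r, n, rfl⟩
  show LinearMap.rTensor N f.toAddMonoidHom.toIntLinearMap
      ((MulOpposite.op r • m) ⊗ₜ[ℤ] n - m ⊗ₜ[ℤ] (r • n)) ∈ trel R M' N
  refine Submodule.subset_span ⟨f m, r, n, ?_⟩
  simp

/-- A left `R`-module `N` is flat if tensoring with it preserves injectivity of maps of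
right `R`-modules. -/
def FlatLeft (R : Type u) [Ring R] (N : Type u) [AddCommGroup N] [Module R N] : Prop :=
  ∀ (A B : Type u) [AddCommGroup A] [Module Rᵐᵒᵖ A] [AddCommGroup B] [Module Rᵐᵒᵖ B]
    (f : A →ₗ[Rᵐᵒᵖ] B), Function.Injective f → Function.Injective (ncMapLeft R N f)

/-- A right `R`-module `M` is flat if tensoring with it preserves injectivity of maps of
left `R`-modules. -/
def FlatRight (R : Type u) [Ring R] (M : Type u) [AddCommGroup M] [Module Rᵐᵒᵖ M] : Prop :=
  ∀ (A B : Type u) [AddCommGroup A] [Module R A] [AddCommGroup B] [Module R B]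
    (f : A →ₗ[R] B), Function.Injective f → Function.Injective (ncMapRight R M f)

/-- An acyclic complex `C` of flat right `R`-modules is F-totally acyclic if `C ⊗_R I`
is acyclic for every injective left `R`-module `I`. -/
def FTotallyAcyclicRight (R : Type u) [Ring R] (C : Cx Rᵐᵒᵖ) : Prop :=
  Acyclic Rᵐᵒᵖ C ∧ (∀ n : ℤ, FlatRight R (C.X n)) ∧
    ∀ (I : Type u) [AddCommGroup I] [Module R I], Module.Injective R I →
      ∀ (n : ℤ) (x : NCTensor R (C.X n) I),
        ncMapLeft R I ((C.d n (n - 1)).hom : C.X n →ₗ[Rᵐᵒᵖ] C.X (n - 1)) x = 0 →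
          ∃ y : NCTensor R (C.X (n + 1)) I,
            ncMapLeft R I ((C.d (n + 1) n).hom : C.X (n + 1) →ₗ[Rᵐᵒᵖ] C.X n) y = x

/-- A right `R`-module is Gorenstein flat if it is a cycle of an F-totally acyclic
complex of flat right modules. -/
def IsGorensteinFlatRight (R : Type u) [Ring R] (M : Type u)
    [AddCommGroup M] [Module Rᵐᵒᵖ M] : Prop :=
  ∃ C : Cx Rᵐᵒᵖ, FTotallyAcyclicRight R C ∧ ∃ n : ℤ, Nonempty (M ≃ₗ[Rᵐᵒᵖ] cycles Rᵐᵒᵖ C n)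

/-- The character module `M⁺ = Hom_ℤ(M, ℚ/ℤ)` of a module `M`. -/
def CharMod (M : Type u) [AddCommGroup M] : Type u := M →+ AddCircle (1 : ℚ)

instance (M : Type u) [AddCommGroup M] : AddCommGroup (CharMod M) :=
  inferInstanceAs (AddCommGroup (M →+ AddCircle (1 : ℚ)))

/-- The right `R`-module structure on the character module of a left `R`-module, given by
`(f · r) (m) = f (r · m)`. -/
instance (R : Type u) [Ring R] (M : Type u) [AddCommGroup M] [Module R M] :
    Module Rᵐᵒᵖ (CharMod M) where
  smul r f := (f : M →+ AddCircle (1 : ℚ)).comp (DistribMulAction.toAddMonoidHom M r.unop)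
  one_smul f := by
    show (f : M →+ AddCircle (1 : ℚ)).comp _ = f
    ext x
    show (show M →+ AddCircle (1 : ℚ) from f) ((1 : Rᵐᵒᵖ).unop • x) = (show M →+ AddCircle (1 : ℚ) from f) x
    rw [MulOpposite.unop_one, one_smul]
  mul_smul r s f := by
    show (f : M →+ AddCircle (1 : ℚ)).comp _ = ((f : M →+ _).comp _).comp _
    ext x
    show (show M →+ AddCircle (1 : ℚ) from f) ((r * s).unop • x) =
      (show M →+ AddCircle (1 : ℚ) from f) (s.unop • r.unop • x)
    rw [MulOpposite.unop_mul, mul_smul]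
  smul_zero r := by
    show (0 : M →+ AddCircle (1 : ℚ)).comp _ = 0
    ext x; simp
  smul_add r f g := by
    show ((f + g : M →+ AddCircle (1 : ℚ))).comp _ = (f : M →+ _).comp _ + (g : M →+ _).comp _
    ext x; rfl
  add_smul r s f := by
    show (f : M →+ AddCircle (1 : ℚ)).comp _ = (f : M →+ _).comp _ + (f : M →+ _).comp _
    ext x
    show (show M →+ AddCircle (1 : ℚ) from f) ((r + s).unop • x) =
      (show M →+ AddCircle (1 : ℚ) from f) (r.unop • x) + (show M →+ AddCircle (1 : ℚ) from f) (s.unop • x)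
    rw [MulOpposite.unop_add, add_smul, map_add]
  zero_smul f := by
    show (f : M →+ AddCircle (1 : ℚ)).comp _ = 0
    ext x
    show (show M →+ AddCircle (1 : ℚ) from f) ((0 : Rᵐᵒᵖ).unop • x) = 0
    rw [MulOpposite.unop_zero, zero_smul, map_zero]


/-!
Let `C` be a totally acyclic complex of injectives with `G ≅ Z_n(C)`. Since `ℚ/ℤ` is an
injective cogenerator, `(-)⁺ = Hom_ℤ(-, ℚ/ℤ)` preserves and reflects exactness, so `C⁺` is
acyclic and `G⁺` is one of its cycles.

Over a left noetherian ring every left ideal `I` has a finite presentation `R^l → R^k → I`.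
For injective `E`, `Hom_R(-, E)` is exact on it, hence so are `E⁺ ⊗_R -` and then
`Hom_R(-, E⁺⁺)`; by Baer's criterion `E⁺⁺` is injective. Through the adjunction
`(E⁺ ⊗_R -)⁺ ≅ Hom_R(-, E⁺⁺)` this makes `E⁺` flat, so `C⁺` consists of flat modules.

Finally, for injective `I`, `(C⁺ ⊗_R I)⁺ ≅ Hom_R(I, C⁺⁺)`. The hypothesis on `R` makes the
acyclic complex of injectives `C⁺⁺` totally acyclic, so `Hom_R(I, C⁺⁺)` is exact, and therefore
so is `C⁺ ⊗_R I`.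
-/

noncomputable section

open MulOpposite

local notation "ℚ⧸ℤ" => AddCircle (1 : ℚ)

section Characters

variable {A B C : Type*} [AddCommGroup A] [AddCommGroup B] [AddCommGroup C]

theorem exists_character_comp_eq (g : B →+ C) (χ : B →+ ℚ⧸ℤ) (hχ : ∀ b, g b = 0 → χ b = 0) :
    ∃ ξ : C →+ ℚ⧸ℤ, ξ.comp g = χ := by
  obtain ⟨ξ, hξ⟩ := (Module.Baer.of_divisible ℚ⧸ℤ).extension_property_addMonoidHom
    (QuotientAddGroup.kerLift g) (QuotientAddGroup.kerLift_injective g)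
    (QuotientAddGroup.lift g.ker χ hχ)
  exact ⟨ξ, AddMonoidHom.ext fun b => DFunLike.congr_fun hξ (b : B ⧸ g.ker)⟩

theorem exists_eq_of_forall_character {f : A →+ B} {g : B →+ C}
    (h : ∀ χ : B →+ ℚ⧸ℤ, χ.comp f = 0 → ∃ ξ : C →+ ℚ⧸ℤ, ξ.comp g = χ)
    {b : B} (hb : g b = 0) : ∃ a, f a = b := by
  by_contra hbf
  have hb0 : (b : B ⧸ f.range) ≠ 0 := fun h0 => hbf ((QuotientAddGroup.eq_zero_iff b).1 h0)
  obtain ⟨χ, hχ⟩ := CharacterModule.exists_character_apply_ne_zero_of_ne_zero hb0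
  obtain ⟨ξ, hξ⟩ := h (χ.comp (QuotientAddGroup.mk' f.range)) <| AddMonoidHom.ext fun a =>
    (congrArg χ ((QuotientAddGroup.eq_zero_iff _).2 ⟨a, rfl⟩)).trans (map_zero χ)
  exact hχ ((DFunLike.congr_fun hξ b).symm.trans (by simp [hb]))

theorem injective_of_forall_character {g : B →+ C}
    (h : ∀ χ : B →+ ℚ⧸ℤ, ∃ ξ : C →+ ℚ⧸ℤ, ξ.comp g = χ) : Function.Injective g := by
  refine (injective_iff_map_eq_zero g).2 fun b hb => ?_
  obtain ⟨_, rfl⟩ := exists_eq_of_forall_character (f := (0 : B →+ B)) (fun χ _ => h χ) hb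
  rfl

end Characters

instance (M : Type u) [AddCommGroup M] : FunLike (CharMod M) M ℚ⧸ℤ :=
  inferInstanceAs (FunLike (M →+ ℚ⧸ℤ) M _)

instance (M : Type u) [AddCommGroup M] : AddMonoidHomClass (CharMod M) M ℚ⧸ℤ :=
  inferInstanceAs (AddMonoidHomClass (M →+ ℚ⧸ℤ) M _)

namespace CharMod

variable {R : Type u} [Ring R]

@[ext] theorem ext {M : Type u} [AddCommGroup M] {χ ξ : CharMod M} (h : ∀ m, χ m = ξ m) :
    χ = ξ :=
  DFunLike.ext _ _ h

theorem sum_apply {M : Type u} [AddCommGroup M] {ι : Type*} (s : Finset ι) (χ : ι → CharMod M)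
    (m : M) : (∑ i ∈ s, χ i) m = ∑ i ∈ s, χ i m :=
  AddMonoidHom.finsetSum_apply (N := ℚ⧸ℤ) χ s m

theorem smul_apply {M : Type u} [AddCommGroup M] [Module R M] (r : Rᵐᵒᵖ) (χ : CharMod M)
    (m : M) : (r • χ) m = χ (r.unop • m) :=
  rfl

instance instModuleOfOp (M : Type u) [AddCommGroup M] [Module Rᵐᵒᵖ M] :
    Module R (CharMod M) where
  smul r f := (f : M →+ ℚ⧸ℤ).comp (DistribSMul.toAddMonoidHom M (op r))
  one_smul f := ext fun m => congrArg f (one_smul Rᵐᵒᵖ m)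
  mul_smul r s f := ext fun m => congrArg f (mul_smul (op s) (op r) m)
  smul_zero _ := rfl
  smul_add _ _ _ := rfl
  add_smul r s f := ext fun m => (congrArg f (add_smul (op r) (op s) m)).trans (map_add f _ _)
  zero_smul f := ext fun m => (congrArg f (zero_smul Rᵐᵒᵖ m)).trans (map_zero f)

theorem smul_apply_op {M : Type u} [AddCommGroup M] [Module Rᵐᵒᵖ M] (r : R) (χ : CharMod M)
    (m : M) : (r • χ) m = χ (op r • m) :=
  rfl

end CharMod

section CharDual

variable {R : Type u} [Ring R] {M N P : Type u} [AddCommGroup M] [AddCommGroup N]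
  [AddCommGroup P]

def charDual [Module R M] [Module R N] (f : M →ₗ[R] N) : CharMod N →ₗ[Rᵐᵒᵖ] CharMod M where
  toFun χ := (χ : N →+ ℚ⧸ℤ).comp f.toAddMonoidHom
  map_add' _ _ := rfl
  map_smul' r χ := CharMod.ext fun m => congrArg χ (f.map_smul r.unop m).symm

def charDualOp [Module Rᵐᵒᵖ M] [Module Rᵐᵒᵖ N] (f : M →ₗ[Rᵐᵒᵖ] N) :
    CharMod N →ₗ[R] CharMod M where
  toFun χ := (χ : N →+ ℚ⧸ℤ).comp f.toAddMonoidHom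
  map_add' _ _ := rfl
  map_smul' r χ := CharMod.ext fun m => congrArg χ (f.map_smul (op r) m).symm

theorem charDual_zero [Module R M] [Module R N] : charDual (0 : M →ₗ[R] N) = 0 :=
  LinearMap.ext fun χ => CharMod.ext fun _ => map_zero χ

theorem charDualOp_zero [Module Rᵐᵒᵖ M] [Module Rᵐᵒᵖ N] :
    charDualOp (0 : M →ₗ[Rᵐᵒᵖ] N) = (0 : CharMod N →ₗ[R] CharMod M) :=
  LinearMap.ext fun χ => CharMod.ext fun _ => map_zero χ

theorem charDual_exact [Module R M] [Module R N] [Module R P] {f : M →ₗ[R] N} {g : N →ₗ[R] P}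
    (hfg : ∀ n, g n = 0 → ∃ m, f m = n) {χ : CharMod N} (hχ : charDual f χ = 0) :
    ∃ ξ, charDual g ξ = χ := by
  obtain ⟨ξ, hξ⟩ := exists_character_comp_eq g.toAddMonoidHom χ fun n hn => by
    obtain ⟨m, rfl⟩ := hfg n hn
    exact DFunLike.congr_fun hχ m
  exact ⟨ξ, CharMod.ext (DFunLike.congr_fun hξ)⟩

theorem charDualOp_exact [Module Rᵐᵒᵖ M] [Module Rᵐᵒᵖ N] [Module Rᵐᵒᵖ P] {f : M →ₗ[Rᵐᵒᵖ] N}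
    {g : N →ₗ[Rᵐᵒᵖ] P} (hfg : ∀ n, g n = 0 → ∃ m, f m = n) {χ : CharMod N}
    (hχ : charDualOp f χ = 0) : ∃ ξ, charDualOp g ξ = χ := by
  obtain ⟨ξ, hξ⟩ := exists_character_comp_eq g.toAddMonoidHom χ fun n hn => by
    obtain ⟨m, rfl⟩ := hfg n hn
    exact DFunLike.congr_fun hχ m
  exact ⟨ξ, CharMod.ext (DFunLike.congr_fun hξ)⟩

theorem charDual_injective [Module R M] [Module R N] {f : M →ₗ[R] N}
    (hf : Function.Surjective f) : Function.Injective (charDual f) := fun χ ξ h =>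
  CharMod.ext fun n => by
    obtain ⟨m, rfl⟩ := hf n
    exact DFunLike.congr_fun h m

theorem range_charDual_eq_ker [Module R M] [Module R N] [Module R P] {f : M →ₗ[R] N}
    {g : N →ₗ[R] P} (hfg : ∀ m, g (f m) = 0) (hexact : ∀ n, g n = 0 → ∃ m, f m = n) :
    LinearMap.range (charDual g) = LinearMap.ker (charDual f) := by
  refine le_antisymm ?_ fun χ hχ => charDual_exact hexact hχ
  rintro _ ⟨ξ, rfl⟩
  exact CharMod.ext fun m => (congrArg ξ (hfg m)).trans (map_zero ξ)

def charDualEquivKer [Module R M] [Module R N] [Module R P] {f : M →ₗ[R] N} {g : N →ₗ[R] P}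
    (hg : Function.Surjective g) (hfg : ∀ m, g (f m) = 0)
    (hexact : ∀ n, g n = 0 → ∃ m, f m = n) :
    CharMod P ≃ₗ[Rᵐᵒᵖ] LinearMap.ker (charDual f) :=
  (LinearEquiv.ofInjective _ (charDual_injective hg)).trans
    (LinearEquiv.ofEq _ _ (range_charDual_eq_ker hfg hexact))

end CharDual

namespace NCTensor

variable {R : Type u} [Ring R] {M : Type u} [AddCommGroup M] [Module Rᵐᵒᵖ M]
  {N : Type u} [AddCommGroup N] [Module R N]

def tmul : M →ₗ[ℤ] N →ₗ[ℤ] NCTensor R M N :=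
  (TensorProduct.mk ℤ M N).compr₂ (trel R M N).mkQ

theorem tmul_op_smul (m : M) (r : R) (n : N) : tmul (op r • m) n = tmul (R := R) m (r • n) :=
  (Submodule.Quotient.eq _).2 (Submodule.subset_span ⟨m, r, n, rfl⟩)

theorem addHom_ext {A : Type*} [AddCommGroup A] {χ ξ : NCTensor R M N →+ A}
    (h : ∀ m n, χ (tmul m n) = ξ (tmul m n)) : χ = ξ := by
  ext x
  obtain ⟨t, rfl⟩ := Submodule.Quotient.mk_surjective _ x
  induction t using TensorProduct.induction_on with
  | zero => exact (map_zero χ).trans (map_zero ξ).symm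
  | tmul m n => exact h m n
  | add s t hs ht =>
    rw [Submodule.Quotient.mk_add, map_add, map_add, hs, ht]

def curry (χ : NCTensor R M N →+ ℚ⧸ℤ) : N →ₗ[R] CharMod M where
  toFun n := χ.comp (tmul.flip n).toAddMonoidHom
  map_add' n n' := CharMod.ext fun m => by
    change χ (tmul m (n + n')) = χ (tmul m n) + χ (tmul m n')
    rw [map_add, map_add]
  map_smul' r n := CharMod.ext fun m => congrArg χ (tmul_op_smul m r n).symm

def uncurry (g : N →ₗ[R] CharMod M) : NCTensor R M N →+ ℚ⧸ℤ :=
  let f : TensorProduct ℤ M N →+ ℚ⧸ℤ := TensorProduct.liftAddHom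
    (g.toAddMonoidHom : N →+ M →+ ℚ⧸ℤ).flip fun z m n => by simp
  ((trel R M N).liftQ f.toIntLinearMap <| Submodule.span_le.2 <| by
    rintro _ ⟨m, r, n, rfl⟩
    simp only [SetLike.mem_coe, LinearMap.mem_ker, AddMonoidHom.coe_toIntLinearMap, map_sub, f,
      TensorProduct.liftAddHom_tmul]
    change g n (op r • m) - g (r • n) m = 0
    rw [map_smul g, CharMod.smul_apply_op, sub_self]).toAddMonoidHom

theorem uncurry_curry (χ : NCTensor R M N →+ ℚ⧸ℤ) : uncurry (curry χ) = χ :=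
  addHom_ext fun _ _ => rfl

theorem uncurry_comp_ncMapRight {N' : Type u} [AddCommGroup N'] [Module R N']
    (g : N' →ₗ[R] CharMod M) (f : N →ₗ[R] N') :
    (uncurry g).comp (ncMapRight R M f).toAddMonoidHom = uncurry (g ∘ₗ f) :=
  addHom_ext fun _ _ => rfl

theorem uncurry_comp_ncMapLeft {M' : Type u} [AddCommGroup M'] [Module Rᵐᵒᵖ M']
    (g : N →ₗ[R] CharMod M') (f : M →ₗ[Rᵐᵒᵖ] M') :
    (uncurry g).comp (ncMapLeft R N f).toAddMonoidHom = uncurry (charDualOp f ∘ₗ g) :=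
  addHom_ext fun _ _ => rfl

theorem curry_comp_ncMapLeft {M' : Type u} [AddCommGroup M'] [Module Rᵐᵒᵖ M']
    (χ : NCTensor R M' N →+ ℚ⧸ℤ) (f : M →ₗ[Rᵐᵒᵖ] M') :
    curry (χ.comp (ncMapLeft R N f).toAddMonoidHom) = charDualOp f ∘ₗ curry χ :=
  rfl

end NCTensor

section Presentations

variable {R : Type u} [Ring R] {k l : ℕ} (a : Fin k → R) (N : Fin l → Fin k → R)

/- `IsHomExact a N M` and `IsTensorExact a N P` say that `Hom_R(-, M)`, resp. `P ⊗_R -`, is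
exact at the middle term of `R^l → R^k → R`, `d ↦ ∑ j, d j • N j`, `c ↦ ∑ i, c i * a i`
(after the identifications `Hom_R(R^k, M) = M^k` and `P ⊗_R R^k = P^k`). -/
def IsHomExact (M : Type u) [AddCommGroup M] [Module R M] : Prop :=
  ∀ e : Fin k → M, (∀ j, ∑ i, N j i • e i = 0) → ∃ x : M, ∀ i, a i • x = e i

def IsTensorExact (P : Type u) [AddCommGroup P] [Module Rᵐᵒᵖ P] : Prop :=
  ∀ v : Fin k → P, ∑ i, op (a i) • v i = 0 → ∃ ξ : Fin l → P, ∀ i, ∑ j, op (N j i) • ξ j = v i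

variable {a N}

theorem isHomExact_of_injective {E : Type u} [AddCommGroup E] [Module R E]
    (hE : Module.Injective R E)
    (hN : LinearMap.ker (Fintype.linearCombination R a) ≤ Submodule.span R (Set.range N)) :
    IsHomExact a N E := by
  intro e he
  set π := Fintype.linearCombination R a
  have hker : LinearMap.ker π ≤ LinearMap.ker (Fintype.linearCombination R e) :=
    hN.trans <| Submodule.span_le.2 <| by rintro _ ⟨j, rfl⟩; exact he j
  obtain ⟨h, hh⟩ := hE.out ((LinearMap.ker π).liftQ π le_rfl)
    (LinearMap.ker_eq_bot.1 (Submodule.ker_liftQ_eq_bot _ _ _ le_rfl))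
    ((LinearMap.ker π).liftQ _ hker)
  refine ⟨h 1, fun i => ?_⟩
  have hi := hh (Submodule.Quotient.mk (Pi.single i 1))
  simp only [Submodule.liftQ_apply, π, Fintype.linearCombination_apply_single, one_smul] at hi
  rw [← hi, ← map_smul, smul_eq_mul, mul_one]

theorem IsHomExact.charMod {M : Type u} [AddCommGroup M] [Module R M] (h : IsHomExact a N M) :
    IsTensorExact a N (CharMod M) := by
  intro v hv
  let χ : (Fin k → M) →+ ℚ⧸ℤ := AddMonoidHom.mk' (fun e => ∑ i, v i (e i)) fun e e' => by
    simp [Finset.sum_add_distrib]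
  let ν : (Fin k → M) →+ (Fin l → M) := AddMonoidHom.mk' (fun e j => ∑ i, N j i • e i)
    fun e e' => by ext j; simp [Finset.sum_add_distrib]
  obtain ⟨Ξ, hΞ⟩ := exists_character_comp_eq ν χ fun e he => by
    obtain ⟨x, hx⟩ := h e (congrFun he)
    calc χ e = (∑ i, op (a i) • v i) x := by simp [χ, ← hx, CharMod.sum_apply, CharMod.smul_apply]
      _ = 0 := by rw [hv]; rfl
  let ξ : Fin l → CharMod M := fun j => Ξ.comp (AddMonoidHom.single (fun _ => M) j)
  refine ⟨ξ, fun i => CharMod.ext fun m => ?_⟩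
  have hν : ν (Pi.single i m) = fun j => N j i • m := funext fun j => by
    change ∑ x, N j x • (Pi.single i m : Fin k → M) x = N j i • m
    rw [Fintype.sum_eq_single i fun x hx => by rw [Pi.single_eq_of_ne hx, smul_zero],
      Pi.single_eq_same]
  calc (∑ j, op (N j i) • ξ j) m = Ξ (∑ j, Pi.single j (N j i • m)) := by
        rw [CharMod.sum_apply, map_sum]; rfl
    _ = Ξ (ν (Pi.single i m)) := by rw [Finset.univ_sum_single, hν]
    _ = v i m := by
        rw [← AddMonoidHom.comp_apply, hΞ]
        change ∑ x, v x ((Pi.single i m : Fin k → M) x) = v i m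
        rw [Fintype.sum_eq_single i fun j hj => by rw [Pi.single_eq_of_ne hj, map_zero],
          Pi.single_eq_same]

theorem IsTensorExact.charMod {P : Type u} [AddCommGroup P] [Module Rᵐᵒᵖ P]
    (h : IsTensorExact a N P) : IsHomExact a N (CharMod P) := by
  intro ψ hψ
  let β : (Fin k → P) →+ P := AddMonoidHom.mk' (fun w => ∑ i, op (a i) • w i) fun w w' => by
    simp [smul_add, Finset.sum_add_distrib]
  let Ψ : (Fin k → P) →+ ℚ⧸ℤ := AddMonoidHom.mk' (fun w => ∑ i, ψ i (w i)) fun w w' => by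
    simp [Finset.sum_add_distrib]
  obtain ⟨φ, hφ⟩ : ∃ φ : CharMod P, (φ : P →+ ℚ⧸ℤ).comp β = Ψ :=
    exists_character_comp_eq β Ψ fun w hw => by
      obtain ⟨ξ, hξ⟩ := h w hw
      obtain rfl : (fun i => ∑ j, op (N j i) • ξ j) = w := funext hξ
      calc Ψ _ = ∑ i, ∑ j, (N j i • ψ i) (ξ j) := by
            change ∑ i, ψ i (∑ j, op (N j i) • ξ j) = _
            simp only [map_sum]; rfl
        _ = ∑ j, (∑ i, N j i • ψ i) (ξ j) := by
          rw [Finset.sum_comm]; simp only [CharMod.sum_apply]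
        _ = 0 := by simp only [hψ]; exact Finset.sum_const_zero
  refine ⟨φ, fun i => CharMod.ext fun p => ?_⟩
  have hβ : β (Pi.single i p) = op (a i) • p := by
    change ∑ x, op (a x) • (Pi.single i p : Fin k → P) x = op (a i) • p
    rw [Fintype.sum_eq_single i fun x hx => by rw [Pi.single_eq_of_ne hx, smul_zero],
      Pi.single_eq_same]
  calc (a i • φ) p = φ (β (Pi.single i p)) := by rw [hβ]; rfl
    _ = ψ i p := by
      change (φ : P →+ ℚ⧸ℤ).comp β (Pi.single i p) = ψ i p
      rw [hφ]
      change ∑ x, ψ x ((Pi.single i p : Fin k → P) x) = ψ i p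
      rw [Fintype.sum_eq_single i fun j hj => by rw [Pi.single_eq_of_ne hj, map_zero],
        Pi.single_eq_same]

end Presentations

section Noetherian

variable {R : Type u} [Ring R] [IsNoetherianRing R]

theorem injective_of_forall_isHomExact {M : Type u} [AddCommGroup M] [Module R M]
    (h : ∀ (k l : ℕ) (a : Fin k → R) (N : Fin l → Fin k → R),
      LinearMap.ker (Fintype.linearCombination R a) = Submodule.span R (Set.range N) →
        IsHomExact a N M) :
    Module.Injective R M := by
  refine Module.Baer.injective fun I φ => ?_
  obtain ⟨k, a, ha⟩ := Submodule.fg_iff_exists_fin_generating_family.1 (IsNoetherian.noetherian I)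
  obtain ⟨l, N, hN⟩ := Submodule.fg_iff_exists_fin_generating_family.1
    (IsNoetherian.noetherian (LinearMap.ker (Fintype.linearCombination R a)))
  have haI : ∀ i, a i ∈ I := fun i => by rw [← ha]; exact Submodule.subset_span ⟨i, rfl⟩
  have hcomb : ∀ c : Fin k → R, ∑ i, c i • φ ⟨a i, haI i⟩ =
      φ ⟨∑ i, c i • a i, I.sum_mem fun i _ => I.smul_mem _ (haI i)⟩ := fun c => by
    simp_rw [← map_smul, ← map_sum]
    congr 1
    ext
    simp
  obtain ⟨x, hx⟩ := h k l a N hN.symm (fun i => φ ⟨a i, haI i⟩) fun j => by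
    have hNj : N j ∈ LinearMap.ker (Fintype.linearCombination R a) := by
      rw [← hN]; exact Submodule.subset_span ⟨j, rfl⟩
    rw [hcomb, ← map_zero φ]
    exact congrArg φ (Subtype.ext hNj)
  refine ⟨LinearMap.toSpanSingleton R M x, fun y hy => ?_⟩
  obtain ⟨c, rfl⟩ := (Submodule.mem_span_range_iff_exists_fun R).1 (ha ▸ hy)
  simp_rw [LinearMap.toSpanSingleton_apply, Finset.sum_smul, smul_assoc, hx]
  exact hcomb c

theorem injective_charMod_charMod {E : Type u} [AddCommGroup E] [Module R E]
    (hE : Module.Injective R E) : Module.Injective R (CharMod (CharMod E)) :=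
  injective_of_forall_isHomExact fun _ _ _ _ hN =>
    (isHomExact_of_injective hE hN.le).charMod.charMod

theorem flatRight_charMod {E : Type u} [AddCommGroup E] [Module R E]
    (hE : Module.Injective R E) : FlatRight R (CharMod E) := by
  intro A B _ _ _ _ f hf
  refine injective_of_forall_character (g := (ncMapRight R (CharMod E) f).toAddMonoidHom)
    fun χ => ?_
  obtain ⟨h, hh⟩ := (injective_charMod_charMod hE).out f hf (NCTensor.curry χ)
  refine ⟨NCTensor.uncurry h, ?_⟩
  rw [NCTensor.uncurry_comp_ncMapRight, LinearMap.ext (f := h ∘ₗ f) hh, NCTensor.uncurry_curry]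

end Noetherian

section Complexes

variable {R : Type u} [Ring R]

theorem Acyclic.exists_d_eq {S : Type u} [Ring S] {C : Cx S} (hC : Acyclic S C) {i j k : ℤ}
    (hij : i = j + 1) (hjk : j = k + 1) (x : C.X j) (hx : C.d j k x = 0) :
    ∃ y : C.X i, C.d i j y = x := by
  subst hij hjk
  exact hC (k + 1) x (by rwa [add_sub_cancel_right])

theorem TotallyAcyclicInj.exists_lift {C : Cx R} (hC : TotallyAcyclicInj R C) {i j k : ℤ}
    (hij : i = j + 1) (hjk : j = k + 1) {E : Type u} [AddCommGroup E] [Module R E]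
    (hE : Module.Injective R E) (f : E →ₗ[R] C.X j) (hf : ∀ x, C.d j k (f x) = 0) :
    ∃ g : E →ₗ[R] C.X i, ∀ x, C.d i j (g x) = f x := by
  subst hij hjk
  exact hC.2.2 E hE (k + 1) f (by rwa [add_sub_cancel_right])

theorem d_apply_d (C : Cx R) (i j k : ℤ) (x : C.X i) : C.d j k (C.d i j x) = 0 :=
  congrArg (fun φ => φ.hom x) (C.d_comp_d i j k)

/-- `(C⁺)_n = (C_{-n})⁺`, reindexed so that `C⁺` is again a chain complex. -/
def dualCx (C : Cx R) : Cx Rᵐᵒᵖ where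
  X n := ModuleCat.of Rᵐᵒᵖ (CharMod (C.X (-n)))
  d i j := ModuleCat.ofHom (charDual (C.d (-j) (-i)).hom)
  shape i j hij := by
    rw [C.shape (-j) (-i) (by simp only [ComplexShape.down_Rel] at hij ⊢; omega)]
    exact congrArg ModuleCat.ofHom charDual_zero
  d_comp_d' i j k _ _ := ModuleCat.hom_ext <| LinearMap.ext fun χ => CharMod.ext fun x =>
    (congrArg χ (d_apply_d C _ _ _ x)).trans (map_zero χ)

def doubleDualCx (C : Cx R) : Cx R where
  X n := ModuleCat.of R (CharMod (CharMod (C.X n)))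
  d i j := ModuleCat.ofHom (charDualOp (charDual (C.d i j).hom))
  shape i j hij := by
    rw [C.shape i j hij]
    exact congrArg ModuleCat.ofHom (by rw [ModuleCat.hom_zero, charDual_zero, charDualOp_zero])
  d_comp_d' i j k _ _ := ModuleCat.hom_ext <| LinearMap.ext fun ψ => CharMod.ext fun χ =>
    (congrArg ψ (CharMod.ext fun x => (congrArg χ (d_apply_d C _ _ _ x)).trans (map_zero χ))).trans
      (map_zero ψ)

theorem acyclic_dualCx {C : Cx R} (hC : Acyclic R C) : Acyclic Rᵐᵒᵖ (dualCx C) :=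
  fun _ _ hx => charDual_exact (fun y hy => hC.exists_d_eq (by omega) (by omega) y hy) hx

theorem acyclic_doubleDualCx {C : Cx R} (hC : Acyclic R C) : Acyclic R (doubleDualCx C) :=
  fun n _ hx => charDualOp_exact (fun _ hy => charDual_exact (hC n) hy) hx

theorem TotallyAcyclicInj.fTotallyAcyclicRight_dualCx [IsNoetherianRing R] {C : Cx R}
    (htot : ∀ C : Cx R, Acyclic R C → (∀ n : ℤ, Module.Injective R (C.X n)) →
      TotallyAcyclicInj R C)
    (hC : TotallyAcyclicInj R C) : FTotallyAcyclicRight R (dualCx C) := by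
  obtain ⟨hAc, hInj, -⟩ := hC
  have hdd : TotallyAcyclicInj R (doubleDualCx C) :=
    htot _ (acyclic_doubleDualCx hAc) fun n => injective_charMod_charMod (hInj n)
  refine ⟨acyclic_dualCx hAc, fun n => flatRight_charMod (hInj (-n)), fun I _ _ hI n x hx => ?_⟩
  refine exists_eq_of_forall_character
    (f := (ncMapLeft R I ((dualCx C).d (n + 1) n).hom).toAddMonoidHom)
    (g := (ncMapLeft R I ((dualCx C).d n (n - 1)).hom).toAddMonoidHom) (fun χ hχ => ?_) hx
  obtain ⟨h, hh⟩ := hdd.exists_lift (i := -(n - 1)) (j := -n) (k := -(n + 1)) (by omega)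
    (by omega) hI (NCTensor.curry χ) fun y => by
      have hy := LinearMap.congr_fun
        (NCTensor.curry_comp_ncMapLeft χ ((dualCx C).d (n + 1) n).hom) y
      rw [hχ] at hy
      exact hy.symm.trans (CharMod.ext fun _ => rfl)
  refine ⟨NCTensor.uncurry h, (NCTensor.uncurry_comp_ncMapLeft h _).trans ?_⟩
  rw [← NCTensor.uncurry_curry χ]
  exact congrArg NCTensor.uncurry (LinearMap.ext hh)

theorem Acyclic.nonempty_charMod_equiv_cycles_dualCx {C : Cx R} (hC : Acyclic R C)
    {G : Type u} [AddCommGroup G] [Module R G] {n : ℤ} (e : G ≃ₗ[R] cycles R C n) :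
    Nonempty (CharMod G ≃ₗ[Rᵐᵒᵖ] cycles Rᵐᵒᵖ (dualCx C) (-(n + 1))) := by
  let π : C.X (-(-(n + 1))) →ₗ[R] G := e.symm.toLinearMap ∘ₗ
    (C.d (-(-(n + 1))) n).hom.codRestrict (cycles R C n) fun x => d_apply_d C _ _ _ x
  have hπ : Function.Surjective π := e.symm.surjective.comp fun ⟨z, hz⟩ =>
    (hC.exists_d_eq (by omega) (by omega) z hz).imp fun _ hy => Subtype.ext hy
  have hdπ (y : C.X (-(-(n + 1) - 1))) : π (C.d _ (-(-(n + 1))) y) = 0 :=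
    (congrArg e.symm (Subtype.ext (d_apply_d C _ _ _ y))).trans (map_zero _)
  exact ⟨charDualEquivKer hπ hdπ fun x hx => hC.exists_d_eq (by omega) (by omega) x
    (congrArg Subtype.val (e.symm.map_eq_zero_iff.1 hx))⟩

end Complexes

end

theorem statement10_general (R : Type u) [Ring R] [IsNoetherianRing R]
    (htot : ∀ C : Cx R, Acyclic R C → (∀ n : ℤ, Module.Injective R (C.X n)) →
      TotallyAcyclicInj R C) :
    ∀ (G : Type u) [AddCommGroup G] [Module R G], IsGorensteinInj R G →
      IsGorensteinFlatRight R (CharMod G) := by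
  rintro G _ _ ⟨C, hC, n, ⟨e⟩⟩
  exact ⟨dualCx C, hC.fTotallyAcyclicRight_dualCx htot, -(n + 1),
    hC.1.nonempty_charMod_equiv_cycles_dualCx e⟩

theorem statement10 (R : Type u) [Ring R] [IsNoetherianRing R] [IsNoetherianRing Rᵐᵒᵖ]
    (htot : ∀ C : Cx R, Acyclic R C → (∀ n : ℤ, Module.Injective R (C.X n)) →
      TotallyAcyclicInj R C) :
    ∀ (G : Type u) [AddCommGroup G] [Module R G], IsGorensteinInj R G →
      IsGorensteinFlatRight R (CharMod G) :=
  statement10_general R htot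

end TotallyAcyclicPaper
end
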